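/- Let (X_t) be a Markov process on {0, 1, ..., N} and Δ : {1, ..., N} → (0, ∞) a monotone increasing function with E[X_t − X_{t+1} | X_t = k] ≥ Δ(k) for all k ≥ 1. Then the first hitting time T = min{t : X_t = 0} satisfies E[T | X_0] ≤ Σ_{k=1}^{X_0} 1/Δ(k). -/

import Mathlib

/-!
With the potential `g k = ∑_{i=1}^{k} 1 / Δ i`, monotonicity of `Δ` gives
`(k - j) / Δ k ≤ g k - g j` for all states `j`, so the drift condition makes `g` drop by at
least one in expectation from every state `k ≥ 1`: `∑_j p k j g j ≤ g k - 1`. For the process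
killed on hitting `0` this turns `G t = E[g (X t); T > t, X 0 = k₀]` into a potential with
`G (t + 1) + P(T > t, X 0 = k₀) ≤ G t`. Telescoping and `G ≥ 0` give
`∑_t P(T > t, X 0 = k₀) ≤ g k₀ P(X 0 = k₀)`, and the left side is `E[T; X 0 = k₀]`.
-/

open MeasureTheory ProbabilityTheory Finset

/-- First hitting time of state `0` for an `ℕ`-valued process, valued in `ℕ∞`. -/
noncomputable def hitZero {Ω : Type*} (X : ℕ → Ω → ℕ) (ω : Ω) : ℕ∞ :=
  ⨅ (t : ℕ) (_ : X t ω = 0), (t : ℕ∞)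

/-- `(X_t)` is a time-homogeneous Markov process with one-step transition
probabilities `p`: conditioned on any event determined by `X_0, …, X_t` together
with `{X_t = k}`, the probability of `{X_{t+1} = j}` is `p k j`. -/
def IsMarkovWith {Ω : Type*} [MeasurableSpace Ω] (μ : Measure Ω)
    (X : ℕ → Ω → ℕ) (p : ℕ → ℕ → ℝ) : Prop :=
  ∀ (t k j : ℕ) (A : Set Ω),
    MeasurableSet[MeasurableSpace.comap (fun ω (i : Fin (t + 1)) => X i ω) inferInstance] A →
      μ (A ∩ {ω | X t ω = k} ∩ {ω | X (t + 1) ω = j})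
        = ENNReal.ofReal (p k j) * μ (A ∩ {ω | X t ω = k})

open scoped ENNReal

section Potential

variable {Δ : ℕ → ℝ} {N : ℕ}

noncomputable def driftPotential (Δ : ℕ → ℝ) (k : ℕ) : ℝ := ∑ i ∈ Icc 1 k, 1 / Δ i

lemma driftPotential_zero : driftPotential Δ 0 = 0 := by simp [driftPotential]

lemma driftPotential_nonneg (hpos : ∀ i ∈ Set.Icc 1 N, 0 < Δ i) {k : ℕ} (hk : k ≤ N) :
    0 ≤ driftPotential Δ k :=
  sum_nonneg fun i hi => (one_div_pos.2 <| hpos i ⟨(mem_Icc.1 hi).1, (mem_Icc.1 hi).2.trans hk⟩).le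

lemma driftPotential_sub_driftPotential {j k : ℕ} (hjk : j ≤ k) :
    driftPotential Δ k - driftPotential Δ j = ∑ i ∈ Ioc j k, 1 / Δ i := by
  have hIcc (n : ℕ) : Icc 1 n = Ioc 0 n := Icc_add_one_left_eq_Ioc 0 n
  rw [driftPotential, driftPotential, hIcc, hIcc, sub_eq_iff_eq_add',
    sum_Ioc_consecutive _ (Nat.zero_le j) hjk]

lemma sub_div_le_driftPotential_sub (hpos : ∀ i ∈ Set.Icc 1 N, 0 < Δ i)
    (hmono : MonotoneOn Δ (Set.Icc 1 N)) {j k : ℕ} (hk : k ∈ Set.Icc 1 N) (hj : j ≤ N) :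
    ((k : ℝ) - j) / Δ k ≤ driftPotential Δ k - driftPotential Δ j := by
  rcases le_total j k with hjk | hkj
  · rw [driftPotential_sub_driftPotential hjk]
    calc ((k : ℝ) - j) / Δ k = #(Ioc j k) • (1 / Δ k) := by
          rw [Nat.card_Ioc, nsmul_eq_mul, Nat.cast_sub hjk]; ring
      _ ≤ ∑ i ∈ Ioc j k, 1 / Δ i := card_nsmul_le_sum _ _ _ fun i hi => by
          have hi' : i ∈ Set.Icc 1 N := ⟨by grind, by grind⟩
          exact one_div_le_one_div_of_le (hpos i hi') (hmono hi' hk (mem_Ioc.1 hi).2)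
  · rw [← neg_sub (driftPotential Δ j), driftPotential_sub_driftPotential hkj, le_neg]
    calc ∑ i ∈ Ioc k j, 1 / Δ i ≤ #(Ioc k j) • (1 / Δ k) := sum_le_card_nsmul _ _ _ fun i hi => by
          have hi' : i ∈ Set.Icc 1 N := ⟨by grind, by grind⟩
          exact one_div_le_one_div_of_le (hpos k hk) (hmono hk hi' (mem_Ioc.1 hi).1.le)
      _ = -(((k : ℝ) - j) / Δ k) := by
          rw [Nat.card_Ioc, nsmul_eq_mul, Nat.cast_sub hkj]; ring

end Potential

lemma sum_mul_le_sub_one_of_drift {w φ : ℕ → ℝ} {d : ℝ} {k N : ℕ} (hd : 0 < d)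
    (hw0 : ∀ j, 0 ≤ w j) (hw1 : ∑ j ∈ range (N + 1), w j = 1)
    (hdrift : d ≤ ∑ j ∈ range (N + 1), w j * ((k : ℝ) - j))
    (hφ : ∀ j ≤ N, ((k : ℝ) - j) / d ≤ φ k - φ j) :
    ∑ j ∈ range (N + 1), w j * φ j ≤ φ k - 1 :=
  calc ∑ j ∈ range (N + 1), w j * φ j
      ≤ ∑ j ∈ range (N + 1), w j * (φ k - ((k : ℝ) - j) / d) :=
        sum_le_sum fun j hj => mul_le_mul_of_nonneg_left
          (by linarith [hφ j (Nat.lt_succ_iff.1 (mem_range.1 hj))]) (hw0 j)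
    _ = φ k - (∑ j ∈ range (N + 1), w j * ((k : ℝ) - j)) / d := by
        have hφk : φ k = ∑ j ∈ range (N + 1), w j * φ k := by rw [← sum_mul, hw1, one_mul]
        rw [sum_div]
        nth_rewrite 2 [hφk]
        rw [← sum_sub_distrib]
        exact sum_congr rfl fun j _ => by ring
    _ ≤ φ k - 1 := by linarith [(one_le_div hd).2 hdrift]

section KilledEvolution

/- `q t` is the mass distribution at time `t` of a chain on `{0, …, N}` with transition
probabilities `p` that is killed on entering `0`. -/
variable {N : ℕ} {p q : ℕ → ℕ → ℝ} {φ : ℕ → ℝ}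

lemma sum_potential_succ_add_sum_le (hq0 : ∀ t k, 0 ≤ q t k) (hq_zero : ∀ t, q t 0 = 0)
    (hq_succ : ∀ t j, j ≠ 0 → q (t + 1) j = ∑ k ∈ range (N + 1), p k j * q t k)
    (hφ_zero : φ 0 = 0)
    (hφ_drop : ∀ k, 1 ≤ k → k ≤ N → ∑ j ∈ range (N + 1), p k j * φ j ≤ φ k - 1) (t : ℕ) :
    ∑ j ∈ range (N + 1), φ j * q (t + 1) j + ∑ k ∈ range (N + 1), q t k
      ≤ ∑ k ∈ range (N + 1), φ k * q t k := by
  have hexpand : ∑ j ∈ range (N + 1), φ j * q (t + 1) j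
      = ∑ k ∈ range (N + 1), q t k * ∑ j ∈ range (N + 1), p k j * φ j := by
    have hterm (j : ℕ) : φ j * q (t + 1) j = ∑ k ∈ range (N + 1), φ j * (p k j * q t k) := by
      rcases eq_or_ne j 0 with rfl | hj
      · simp [hφ_zero]
      · rw [hq_succ t j hj, mul_sum]
    simp only [hterm, mul_sum]
    rw [sum_comm]
    exact sum_congr rfl fun k _ => sum_congr rfl fun j _ => by ring
  have hdrop : ∀ k ∈ range (N + 1),
      q t k * ∑ j ∈ range (N + 1), p k j * φ j ≤ φ k * q t k - q t k := by
    intro k hk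
    rcases Nat.eq_zero_or_pos k with rfl | hk0
    · simp [hq_zero]
    · nlinarith [hφ_drop k hk0 (Nat.lt_succ_iff.1 (mem_range.1 hk)), hq0 t k]
  rw [hexpand, ← le_sub_iff_add_le, ← sum_sub_distrib]
  exact sum_le_sum hdrop

lemma sum_range_sum_le_sum_potential (hq0 : ∀ t k, 0 ≤ q t k) (hq_zero : ∀ t, q t 0 = 0)
    (hq_succ : ∀ t j, j ≠ 0 → q (t + 1) j = ∑ k ∈ range (N + 1), p k j * q t k)
    (hφ_zero : φ 0 = 0) (hφ_nonneg : ∀ k ≤ N, 0 ≤ φ k)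
    (hφ_drop : ∀ k, 1 ≤ k → k ≤ N → ∑ j ∈ range (N + 1), p k j * φ j ≤ φ k - 1) (n : ℕ) :
    ∑ t ∈ range n, ∑ k ∈ range (N + 1), q t k ≤ ∑ k ∈ range (N + 1), φ k * q 0 k := by
  suffices h : ∑ j ∈ range (N + 1), φ j * q n j + ∑ t ∈ range n, ∑ k ∈ range (N + 1), q t k
      ≤ ∑ k ∈ range (N + 1), φ k * q 0 k by
    have hpot : 0 ≤ ∑ j ∈ range (N + 1), φ j * q n j := sum_nonneg fun j hj =>
      mul_nonneg (hφ_nonneg j (Nat.lt_succ_iff.1 (mem_range.1 hj))) (hq0 n j)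
    linarith
  induction n with
  | zero => simp
  | succ n ih =>
    have := sum_potential_succ_add_sum_le hq0 hq_zero hq_succ hφ_zero hφ_drop n
    rw [sum_range_succ (fun t => ∑ k ∈ range (N + 1), q t k)]
    linarith

end KilledEvolution

namespace ENat

lemma toENNReal_eq_tsum_indicator_lt (m : ℕ∞) :
    (m : ℝ≥0∞) = ∑' t : ℕ, {t : ℕ | (t : ℕ∞) < m}.indicator 1 t := by
  rw [← _root_.tsum_subtype, Pi.one_def, ENNReal.tsum_set_one]
  congr 1
  cases m with
  | top => simp
  | coe n => simpa [Set.Iio_def] using (Set.encard_coe_eq_coe_finsetCard (range n)).symm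

end ENat

section HittingTime

variable {Ω : Type*}

lemma lt_hitZero_iff {X : ℕ → Ω → ℕ} {ω : Ω} {t : ℕ} :
    (t : ℕ∞) < hitZero X ω ↔ ∀ s ≤ t, X s ω ≠ 0 := by
  rw [← ENat.add_one_le_iff (ENat.natCast_ne_top t), hitZero, le_iInf₂_iff]
  refine forall_congr' fun s => ?_
  norm_cast
  grind

def survivalSet (X : ℕ → Ω → ℕ) (k₀ t : ℕ) : Set Ω :=
  {ω | X 0 ω = k₀ ∧ ∀ s ≤ t, X s ω ≠ 0}

lemma measurableSet_forall_le_ne {m : MeasurableSpace Ω} {X : ℕ → Ω → ℕ} {t : ℕ}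
    (hX : ∀ s ≤ t, Measurable[m] (X s)) (a : ℕ) :
    MeasurableSet[m] {ω | ∀ s ≤ t, X s ω ≠ a} := by
  have : {ω | ∀ s ≤ t, X s ω ≠ a} = ⋂ s ∈ Iic t, (X s ⁻¹' {a})ᶜ := by ext; simp
  rw [this]
  exact Finset.measurableSet_biInter _ fun s hs =>
    (hX s (mem_Iic.1 hs) (measurableSet_singleton a)).compl

lemma measurableSet_survivalSet {m : MeasurableSpace Ω} {X : ℕ → Ω → ℕ} {k₀ t : ℕ}
    (hX : ∀ s ≤ t, Measurable[m] (X s)) : MeasurableSet[m] (survivalSet X k₀ t) :=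
  (hX 0 t.zero_le (measurableSet_singleton k₀)).inter (measurableSet_forall_le_ne hX 0)

lemma measurable_comap_prefix (X : ℕ → Ω → ℕ) {s t : ℕ} (hs : s ≤ t) :
    Measurable[MeasurableSpace.comap (fun ω (i : Fin (t + 1)) => X i ω) inferInstance] (X s) :=
  (measurable_pi_apply (⟨s, Nat.lt_succ_of_le hs⟩ : Fin (t + 1))).comp
    (comap_measurable (fun ω (i : Fin (t + 1)) => X i ω))

lemma survivalSet_succ_inter_eq {X : ℕ → Ω → ℕ} {k₀ t j : ℕ} (hj : j ≠ 0) :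
    survivalSet X k₀ (t + 1) ∩ {ω | X (t + 1) ω = j}
      = survivalSet X k₀ t ∩ {ω | X (t + 1) ω = j} := by
  ext ω
  simp only [survivalSet, Set.mem_inter_iff, Set.mem_ofPred_eq]
  constructor
  · rintro ⟨⟨h0, hs⟩, hj'⟩
    exact ⟨⟨h0, fun s hst => hs s (hst.trans t.le_succ)⟩, hj'⟩
  · rintro ⟨⟨h0, hs⟩, hj'⟩
    refine ⟨⟨h0, fun s hst => ?_⟩, hj'⟩
    rcases Nat.le_succ_iff.1 hst with hst | rfl
    · exact hs s hst
    · rwa [hj']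

lemma survivalSet_inter_eq_zero {X : ℕ → Ω → ℕ} {k₀ t : ℕ} :
    survivalSet X k₀ t ∩ {ω | X t ω = 0} = ∅ :=
  Set.eq_empty_of_forall_notMem fun _ ⟨⟨_, hs⟩, h0⟩ => hs t le_rfl h0

lemma setOf_lt_hitZero_inter {X : ℕ → Ω → ℕ} {k₀ t : ℕ} :
    {ω | (t : ℕ∞) < hitZero X ω} ∩ {ω | X 0 ω = k₀} = survivalSet X k₀ t := by
  ext ω
  simp only [survivalSet, Set.mem_inter_iff, Set.mem_ofPred_eq, lt_hitZero_iff, and_comm]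

variable [MeasurableSpace Ω] {μ : Measure Ω}

lemma lintegral_enat_eq_tsum_measure_lt (ν : Measure Ω) {m : Ω → ℕ∞}
    (hm : ∀ t : ℕ, MeasurableSet {ω | (t : ℕ∞) < m ω}) :
    ∫⁻ ω, (m ω : ℝ≥0∞) ∂ν = ∑' t : ℕ, ν {ω | (t : ℕ∞) < m ω} :=
  calc ∫⁻ ω, (m ω : ℝ≥0∞) ∂ν = ∫⁻ ω, ∑' t : ℕ, {ω | (t : ℕ∞) < m ω}.indicator 1 ω ∂ν :=
        lintegral_congr fun ω => ENat.toENNReal_eq_tsum_indicator_lt (m ω)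
    _ = ∑' t : ℕ, ν {ω | (t : ℕ∞) < m ω} := by
        rw [lintegral_tsum fun t => (measurable_one.indicator (hm t)).aemeasurable]
        simp only [lintegral_indicator_one (hm _)]

lemma setLIntegral_hitZero_eq_tsum {X : ℕ → Ω → ℕ} (hX : ∀ t, Measurable (X t)) (k₀ : ℕ) :
    ∫⁻ ω in {ω | X 0 ω = k₀}, (hitZero X ω : ℝ≥0∞) ∂μ = ∑' t, μ (survivalSet X k₀ t) := by
  have hlt (t : ℕ) : MeasurableSet {ω | (t : ℕ∞) < hitZero X ω} := by
    simp_rw [lt_hitZero_iff]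
    exact measurableSet_forall_le_ne (fun s _ => hX s) 0
  rw [lintegral_enat_eq_tsum_measure_lt _ hlt]
  simp only [Measure.restrict_apply (hlt _), setOf_lt_hitZero_inter]

lemma measure_eq_sum_measure_inter_eq {f : Ω → ℕ} {N : ℕ} (hf : Measurable f)
    (hN : ∀ ω, f ω ≤ N) (E : Set Ω) :
    μ E = ∑ k ∈ range (N + 1), μ (E ∩ {ω | f ω = k}) := by
  have hfib (k : ℕ) : MeasurableSet (f ⁻¹' {k}) := hf (measurableSet_singleton k)
  have hcover : f ⁻¹' ↑(range (N + 1)) = Set.univ := by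
    ext ω; simp [hN ω]
  have := sum_measure_preimage_singleton (μ := μ.restrict E) (range (N + 1)) fun k _ => hfib k
  rw [hcover, Measure.restrict_apply_univ] at this
  rw [← this]
  exact sum_congr rfl fun k _ => by rw [Measure.restrict_apply (hfib k), Set.inter_comm]; rfl

variable {N : ℕ} {X : ℕ → Ω → ℕ} {p : ℕ → ℕ → ℝ}

lemma measure_survivalSet_succ_inter_eq (hmeas : ∀ t, Measurable (X t))
    (hrange : ∀ t ω, X t ω ≤ N) (hMarkov : IsMarkovWith μ X p) {k₀ t j : ℕ} (hj : j ≠ 0) :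
    μ (survivalSet X k₀ (t + 1) ∩ {ω | X (t + 1) ω = j})
      = ∑ k ∈ range (N + 1),
          ENNReal.ofReal (p k j) * μ (survivalSet X k₀ t ∩ {ω | X t ω = k}) := by
  rw [survivalSet_succ_inter_eq hj, measure_eq_sum_measure_inter_eq (hmeas t) (hrange t)]
  refine sum_congr rfl fun k _ => ?_
  rw [Set.inter_right_comm, hMarkov t k j _ <|
    measurableSet_survivalSet fun s hs => measurable_comap_prefix X hs]

variable [IsFiniteMeasure μ]

lemma sum_range_measureReal_survivalSet_le (hmeas : ∀ t, Measurable (X t))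
    (hrange : ∀ t ω, X t ω ≤ N) (hp0 : ∀ k j, 0 ≤ p k j) (hMarkov : IsMarkovWith μ X p)
    {φ : ℕ → ℝ} (hφ_zero : φ 0 = 0) (hφ_nonneg : ∀ k ≤ N, 0 ≤ φ k)
    (hφ_drop : ∀ k, 1 ≤ k → k ≤ N → ∑ j ∈ range (N + 1), p k j * φ j ≤ φ k - 1)
    {k₀ : ℕ} (hk₀ : k₀ ≤ N) (n : ℕ) :
    ∑ t ∈ range n, μ.real (survivalSet X k₀ t) ≤ φ k₀ * μ.real {ω | X 0 ω = k₀} := by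
  set q : ℕ → ℕ → ℝ := fun t k => μ.real (survivalSet X k₀ t ∩ {ω | X t ω = k})
  have hmass (t : ℕ) : μ.real (survivalSet X k₀ t) = ∑ k ∈ range (N + 1), q t k := by
    rw [Measure.real, measure_eq_sum_measure_inter_eq (hmeas t) (hrange t),
      ENNReal.toReal_sum fun _ _ => measure_ne_top _ _]
    rfl
  have hq_succ (t j : ℕ) (hj : j ≠ 0) : q (t + 1) j = ∑ k ∈ range (N + 1), p k j * q t k := by
    simp only [q, Measure.real, measure_survivalSet_succ_inter_eq hmeas hrange hMarkov hj,
      ENNReal.toReal_sum fun _ _ => ENNReal.mul_ne_top ENNReal.ofReal_ne_top (measure_ne_top _ _),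
      ENNReal.toReal_mul, ENNReal.toReal_ofReal (hp0 _ _)]
  have hstart : ∑ k ∈ range (N + 1), φ k * q 0 k ≤ φ k₀ * μ.real {ω | X 0 ω = k₀} := by
    rw [sum_eq_single k₀ ?_ (fun h => absurd (mem_range.2 (Nat.lt_succ_of_le hk₀)) h)]
    · exact mul_le_mul_of_nonneg_left (measureReal_mono fun ω hω => hω.2) (hφ_nonneg k₀ hk₀)
    · intro k _ hk
      have : survivalSet X k₀ 0 ∩ {ω | X 0 ω = k} = ∅ :=
        Set.eq_empty_of_forall_notMem fun _ ⟨⟨h₀, _⟩, h⟩ => hk (h.symm.trans h₀)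
      simp [q, this]
  simp only [hmass]
  refine (sum_range_sum_le_sum_potential (fun _ _ => measureReal_nonneg) (fun t => ?_) hq_succ
    hφ_zero hφ_nonneg hφ_drop n).trans hstart
  simp [survivalSet_inter_eq_zero]

lemma tsum_measure_survivalSet_le (hmeas : ∀ t, Measurable (X t))
    (hrange : ∀ t ω, X t ω ≤ N) (hp0 : ∀ k j, 0 ≤ p k j) (hMarkov : IsMarkovWith μ X p)
    {φ : ℕ → ℝ} (hφ_zero : φ 0 = 0) (hφ_nonneg : ∀ k ≤ N, 0 ≤ φ k)
    (hφ_drop : ∀ k, 1 ≤ k → k ≤ N → ∑ j ∈ range (N + 1), p k j * φ j ≤ φ k - 1)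
    {k₀ : ℕ} (hk₀ : k₀ ≤ N) :
    ∑' t, μ (survivalSet X k₀ t) ≤ ENNReal.ofReal (φ k₀) * μ {ω | X 0 ω = k₀} :=
  ENNReal.tsum_le_of_sum_range_le fun n => calc
    ∑ t ∈ range n, μ (survivalSet X k₀ t)
        = ENNReal.ofReal (∑ t ∈ range n, μ.real (survivalSet X k₀ t)) := by
          simp [ENNReal.ofReal_sum_of_nonneg, ofReal_measureReal]
    _ ≤ ENNReal.ofReal (φ k₀ * μ.real {ω | X 0 ω = k₀}) := ENNReal.ofReal_le_ofReal <|
          sum_range_measureReal_survivalSet_le hmeas hrange hp0 hMarkov hφ_zero hφ_nonneg hφ_drop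
            hk₀ n
    _ = ENNReal.ofReal (φ k₀) * μ {ω | X 0 ω = k₀} := by
          rw [ENNReal.ofReal_mul (hφ_nonneg k₀ hk₀), ofReal_measureReal]

end HittingTime

/-- Discrete variable drift theorem (upper bound): for a Markov process on
`{0, …, N}` whose drift from state `k ≥ 1` is at least `Δ k` with `Δ` positive
and monotone increasing, the first hitting time of `0` satisfies
`E[T | X_0] ≤ ∑_{k=1}^{X_0} 1 / Δ k`. -/
theorem discrete_variable_drift_upper
    {Ω : Type*} {m0 : MeasurableSpace Ω} {μ : Measure Ω} [IsProbabilityMeasure μ]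
    (N : ℕ) (X : ℕ → Ω → ℕ)
    (hmeas : ∀ t, Measurable (X t))
    (hrange : ∀ t ω, X t ω ≤ N)
    (p : ℕ → ℕ → ℝ)
    (hp0 : ∀ k j, 0 ≤ p k j)
    (hp1 : ∀ k, k ≤ N → ∑ j ∈ range (N + 1), p k j = 1)
    (hMarkov : IsMarkovWith μ X p)
    (Δ : ℕ → ℝ)
    (hΔpos : ∀ k, 1 ≤ k → k ≤ N → 0 < Δ k)
    (hΔmono : ∀ k l, 1 ≤ k → k ≤ l → l ≤ N → Δ k ≤ Δ l)
    (hdrift : ∀ k, 1 ≤ k → k ≤ N →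
      Δ k ≤ ∑ j ∈ range (N + 1), p k j * ((k : ℝ) - j)) :
    ∀ k0, k0 ≤ N → μ {ω | X 0 ω = k0} ≠ 0 →
      ∫⁻ ω, (hitZero X ω : ENNReal) ∂(μ[|{ω | X 0 ω = k0}])
        ≤ ENNReal.ofReal (∑ k ∈ Icc 1 k0, 1 / Δ k) := by
  intro k0 hk0 hB
  have hpos : ∀ i ∈ Set.Icc 1 N, 0 < Δ i := fun i hi => hΔpos i hi.1 hi.2
  have hmono : MonotoneOn Δ (Set.Icc 1 N) := fun k hk l hl hkl => hΔmono k l hk.1 hkl hl.2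
  have hdrop (k : ℕ) (hk1 : 1 ≤ k) (hkN : k ≤ N) :
      ∑ j ∈ range (N + 1), p k j * driftPotential Δ j ≤ driftPotential Δ k - 1 :=
    sum_mul_le_sub_one_of_drift (hΔpos k hk1 hkN) (hp0 k) (hp1 k hkN) (hdrift k hk1 hkN)
      fun _ hj => sub_div_le_driftPotential_sub hpos hmono ⟨hk1, hkN⟩ hj
  have htail := tsum_measure_survivalSet_le hmeas hrange hp0 hMarkov driftPotential_zero
    (fun _ hk => driftPotential_nonneg hpos hk) hdrop hk0
  rw [ProbabilityTheory.cond, lintegral_smul_measure, setLIntegral_hitZero_eq_tsum hmeas]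
  calc (μ {ω | X 0 ω = k0})⁻¹ * ∑' t, μ (survivalSet X k0 t)
      ≤ (μ {ω | X 0 ω = k0})⁻¹ * (ENNReal.ofReal (driftPotential Δ k0) * μ {ω | X 0 ω = k0}) :=
        mul_le_mul_right htail _
    _ = ENNReal.ofReal (driftPotential Δ k0) := by
        rw [mul_comm, mul_assoc, ENNReal.mul_inv_cancel hB (measure_ne_top _ _), mul_one]
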